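/- arXiv:1401.7303 — 3 statements merged into one kernel-verified Lean document; each statement's English description precedes it below -/
import Mathlib

section
/- Let H be a polarized integral Hodge structure of weight zero, with underlying free Z-module H_Z, polarization form Q, and Hodge filtration F. If a class h ∈ H_Z satisfies |Q(h,h)| ≤ K and |Q(h,v)| ≤ R·‖v‖_H for every v ∈ F¹H (where ‖·‖_H denotes the Hodge norm), then ‖h‖_H² ≤ K + 4R². -/
/-!
Write `hᵖ = π p h`; since `h` is real, `conj hᵖ = h⁻ᵖ`, and with `aₚ = Q(hᵖ, h⁻ᵖ) = a₋ₚ` we have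
`Q(h, h) = ∑ aₚ` while `‖h‖² = ∑ (-1)ᵖ aₚ`. The two differ only in the odd degrees, and pairing
`p` with `-p` gives `‖h‖² = Q(h, h) + 4 ‖v‖²` for `v = ∑_{p > 0 odd} hᵖ ∈ F¹`. Moreover
`Q(h, v) = ∑_{p > 0 odd} aₚ = -‖v‖²`, so the hypothesis on `F¹` reads `‖v‖² ≤ R ‖v‖`,
i.e. `‖v‖² ≤ R²`.
-/

open scoped ComplexOrder

theorem Finset.sum_eq_two_nsmul_sum_pos {M : Type*} [AddCommMonoid M] {s : Finset ℤ}
    {f : ℤ → M} (hneg : ∀ p, f (-p) = f p) (hs : ∀ p ∉ s, f p = 0) (h0 : f 0 = 0) :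
    ∑ p ∈ s, f p = 2 • ∑ p ∈ s with 0 < p, f p := by
  have hmem : ∀ p, f p ≠ 0 → -p ∈ s := fun p hp =>
    by_contra fun h => hp (by rw [← hneg, hs _ h])
  rw [← Finset.sum_filter_add_sum_filter_not s (0 < ·), two_nsmul, add_comm]
  congr 1
  refine Finset.sum_bij_ne_zero (fun p _ _ => -p) (fun p hp hfp => ?_)
    (fun _ _ _ _ _ _ => neg_inj.mp) (fun q hq hfq => ?_) (fun p _ _ => (hneg p).symm)
  · have hp0 : p ≠ 0 := by rintro rfl; exact hfp h0
    simp only [Finset.mem_filter] at hp ⊢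
    exact ⟨hmem p hfp, by omega⟩
  · have hq0 : 0 < q := (Finset.mem_filter.mp hq).2
    exact ⟨-q, Finset.mem_filter.mpr ⟨hmem q hfq, by omega⟩, by rwa [hneg], neg_neg q⟩

theorem Finset.sum_neg_one_zpow_mul_eq {s : Finset ℤ} {a : ℤ → ℂ} (hneg : ∀ p, a (-p) = a p)
    (hs : ∀ p ∉ s, a p = 0) :
    ∑ p ∈ s, (-1 : ℂ) ^ p * a p = ∑ p ∈ s, a p - 4 * ∑ p ∈ s with 0 < p ∧ Odd p, a p := by
  have hodd : ∑ p ∈ s, (if Odd p then a p else 0) = 2 * ∑ p ∈ s with 0 < p ∧ Odd p, a p := by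
    rw [Finset.sum_eq_two_nsmul_sum_pos (fun p => by simp [hneg]) (fun p hp => by simp [hs p hp])
      (by simp), ← Finset.sum_filter, Finset.filter_filter, two_nsmul, two_mul]
  have hterm : ∀ p, (-1 : ℂ) ^ p * a p = a p - 2 * if Odd p then a p else 0 := fun p => by
    rcases Int.even_or_odd p with hp | hp
    · simp [hp.neg_one_zpow, Int.not_odd_iff_even.mpr hp]
    · simp [hp.neg_one_zpow, hp]; ring
  rw [Finset.sum_congr rfl fun p _ => hterm p, Finset.sum_sub_distrib, ← Finset.mul_sum, hodd]
  ring

section HodgeDecomposition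

variable {H : Type*} [AddCommGroup H] [Module ℂ H] {s : Finset ℤ} {π : ℤ → H →ₗ[ℂ] H}

theorem proj_eq_zero_of_notMem (hsum : ∀ x, ∑ p ∈ s, π p x = x)
    (horth : ∀ p q, p ≠ q → ∀ x, π p (π q x) = 0) {p : ℤ} (hp : p ∉ s) (x : H) :
    π p x = 0 := by
  rw [← hsum x, map_sum]
  exact Finset.sum_eq_zero fun q hq => horth p q (ne_of_mem_of_not_mem hq hp).symm x

theorem proj_sum_proj (horth : ∀ p q, p ≠ q → ∀ x, π p (π q x) = 0)
    (hidem : ∀ p x, π p (π p x) = π p x) (t : Finset ℤ) (q : ℤ) (x : H) :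
    π q (∑ p ∈ t, π p x) = if q ∈ t then π q x else 0 := by
  rw [map_sum]
  split_ifs with hq
  · rw [Finset.sum_eq_single_of_mem q hq fun p _ hpq => horth q p hpq.symm x, hidem]
  · exact Finset.sum_eq_zero fun p hp => horth q p (ne_of_mem_of_not_mem hp hq).symm x

theorem polarization_apply_proj (hsum : ∀ x, ∑ p ∈ s, π p x = x)
    (horth : ∀ p q, p ≠ q → ∀ x, π p (π q x) = 0) {Q : H →ₗ[ℂ] H →ₗ[ℂ] ℂ}
    (hQorth : ∀ p q x y, q ≠ -p → Q (π p x) (π q y) = 0) (p : ℤ) (x y : H) :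
    Q x (π p y) = Q (π (-p) x) (π p y) := by
  conv_lhs => rw [← hsum x]
  rw [map_sum, LinearMap.coe_sum, Finset.sum_apply]
  refine Finset.sum_eq_single (-p) (fun q _ hq => hQorth q p x y (by omega)) fun hp => ?_
  rw [proj_eq_zero_of_notMem hsum horth hp, map_zero, LinearMap.zero_apply]

theorem polarization_self_sum_proj (hsum : ∀ x, ∑ p ∈ s, π p x = x)
    (horth : ∀ p q, p ≠ q → ∀ x, π p (π q x) = 0) {Q : H →ₗ[ℂ] H →ₗ[ℂ] ℂ}
    (hQsymm : ∀ x y, Q x y = Q y x) (hQorth : ∀ p q x y, q ≠ -p → Q (π p x) (π q y) = 0)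
    (t : Finset ℤ) (h : H) :
    Q h (∑ p ∈ t, π p h) = ∑ p ∈ t, Q (π p h) (π (-p) h) := by
  rw [map_sum]
  exact Finset.sum_congr rfl fun p _ => by rw [polarization_apply_proj hsum horth hQorth, hQsymm]

noncomputable def hodgeNormSq (s : Finset ℤ) (π : ℤ → H →ₗ[ℂ] H) (conj : H →+ H)
    (Q : H →ₗ[ℂ] H →ₗ[ℂ] ℂ) (x : H) : ℂ :=
  ∑ p ∈ s, (-1 : ℂ) ^ p * Q (π p x) (conj (π p x))

variable {conj : H →+ H} {Q : H →ₗ[ℂ] H →ₗ[ℂ] ℂ} {h : H}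

theorem hodgeNormSq_sum_proj (horth : ∀ p q, p ≠ q → ∀ x, π p (π q x) = 0)
    (hidem : ∀ p x, π p (π p x) = π p x) (hreal : ∀ p, conj (π p h) = π (-p) h)
    {t : Finset ℤ} (hts : t ⊆ s) :
    hodgeNormSq s π conj Q (∑ p ∈ t, π p h) = ∑ p ∈ t, (-1 : ℂ) ^ p * Q (π p h) (π (-p) h) := by
  classical
  have hterm : ∀ p, (-1 : ℂ) ^ p * Q (π p (∑ q ∈ t, π q h)) (conj (π p (∑ q ∈ t, π q h))) =
      if p ∈ t then (-1 : ℂ) ^ p * Q (π p h) (π (-p) h) else 0 := fun p => by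
    rw [proj_sum_proj horth hidem]
    split_ifs <;> simp [hreal]
  simp only [hodgeNormSq, hterm, Finset.sum_ite_mem, Finset.inter_eq_right.mpr hts]

theorem polarization_oddPart_eq_neg_hodgeNormSq (hsum : ∀ x, ∑ p ∈ s, π p x = x)
    (horth : ∀ p q, p ≠ q → ∀ x, π p (π q x) = 0) (hidem : ∀ p x, π p (π p x) = π p x)
    (hreal : ∀ p, conj (π p h) = π (-p) h) (hQsymm : ∀ x y, Q x y = Q y x)
    (hQorth : ∀ p q x y, q ≠ -p → Q (π p x) (π q y) = 0) :
    Q h (∑ p ∈ s with 0 < p ∧ Odd p, π p h) =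
      -hodgeNormSq s π conj Q (∑ p ∈ s with 0 < p ∧ Odd p, π p h) := by
  rw [polarization_self_sum_proj hsum horth hQsymm hQorth,
    hodgeNormSq_sum_proj horth hidem hreal (Finset.filter_subset _ s), ← Finset.sum_neg_distrib]
  refine Finset.sum_congr rfl fun p hp => ?_
  rw [(Finset.mem_filter.mp hp).2.2.neg_one_zpow, neg_one_mul, neg_neg]

theorem hodgeNormSq_eq_polarization_add_oddPart (hsum : ∀ x, ∑ p ∈ s, π p x = x)
    (horth : ∀ p q, p ≠ q → ∀ x, π p (π q x) = 0) (hidem : ∀ p x, π p (π p x) = π p x)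
    (hreal : ∀ p, conj (π p h) = π (-p) h) (hQsymm : ∀ x y, Q x y = Q y x)
    (hQorth : ∀ p q x y, q ≠ -p → Q (π p x) (π q y) = 0) :
    hodgeNormSq s π conj Q h =
      Q h h + 4 * hodgeNormSq s π conj Q (∑ p ∈ s with 0 < p ∧ Odd p, π p h) := by
  have hsplit := Finset.sum_neg_one_zpow_mul_eq (a := fun p => Q (π p h) (π (-p) h))
    (fun p => by rw [neg_neg, hQsymm]) fun p hp => by
      rw [proj_eq_zero_of_notMem hsum horth hp, map_zero, LinearMap.zero_apply]
  have hnorm_h := hodgeNormSq_sum_proj (Q := Q) horth hidem hreal (subset_refl s)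
  rw [hsum] at hnorm_h
  rw [hnorm_h, hsplit, ← polarization_self_sum_proj hsum horth hQsymm hQorth, hsum,
    ← polarization_self_sum_proj hsum horth hQsymm hQorth,
    polarization_oddPart_eq_neg_hodgeNormSq hsum horth hidem hreal hQsymm hQorth]
  ring

end HodgeDecomposition

theorem stmt_0_general {H : Type*} [AddCommGroup H] [Module ℂ H]
    -- the Hodge decomposition H = ⊕ₚ H^{p,-p}, via its projections
    (s : Finset ℤ) (π : ℤ → (H →ₗ[ℂ] H))
    (hsum : ∀ x : H, ∑ p ∈ s, π p x = x)
    (horth : ∀ p q : ℤ, p ≠ q → ∀ x : H, π p (π q x) = 0)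
    (hidem : ∀ (p : ℤ) (x : H), π p (π p x) = π p x)
    -- conjugation with respect to the real structure, swapping H^{p,-p} and H^{-p,p}
    (conj : H →+ H)
    (hconjπ : ∀ (p : ℤ) (x : H), conj (π p x) = π (-p) (conj x))
    -- the polarization form and the bilinear relations
    (Q : H →ₗ[ℂ] H →ₗ[ℂ] ℂ)
    (hQsymm : ∀ x y : H, Q x y = Q y x)
    (hQorth : ∀ (p q : ℤ) (x y : H), q ≠ -p → Q (π p x) (π q y) = 0)
    (hQpos : ∀ (p : ℤ) (x : H),
      0 ≤ ((-1 : ℂ) ^ p * Q (π p x) (conj (π p x))).re ∧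
      ((-1 : ℂ) ^ p * Q (π p x) (conj (π p x))).im = 0)
    -- the integral lattice (consisting of real classes)
    (HZ : AddSubgroup H) (hHZ : ∀ x ∈ HZ, conj x = x)
    -- the Hodge norm
    (normH : H → ℝ)
    (hnormH : ∀ x : H,
      normH x = Real.sqrt (∑ p ∈ s, ((-1 : ℂ) ^ p * Q (π p x) (conj (π p x))).re))
    (K R : ℝ)
    (h : H) (hh : h ∈ HZ)
    (hQh : ‖Q h h‖ ≤ K)
    (hQhv : ∀ v : H, (∀ p : ℤ, p ≤ 0 → π p v = 0) → ‖Q h v‖ ≤ R * normH v) :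
    (normH h) ^ 2 ≤ K + 4 * R ^ 2 := by
  have hreal : ∀ p, conj (π p h) = π (-p) h := fun p => by rw [hconjπ, hHZ h hh]
  have hpos : ∀ x, 0 ≤ hodgeNormSq s π conj Q x := fun x =>
    Finset.sum_nonneg fun p _ => Complex.nonneg_iff.mpr ⟨(hQpos p x).1, (hQpos p x).2.symm⟩
  have hnormH_sq : ∀ x, normH x ^ 2 = (hodgeNormSq s π conj Q x).re := fun x => by
    rw [hnormH, Real.sq_sqrt (Finset.sum_nonneg fun p _ => (hQpos p x).1), hodgeNormSq,
      Complex.re_sum]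
  set v := ∑ p ∈ s with 0 < p ∧ Odd p, π p h
  have hv_mem : ∀ p : ℤ, p ≤ 0 → π p v = 0 := fun p hp => by
    rw [proj_sum_proj horth hidem, if_neg fun hpv => hp.not_gt (Finset.mem_filter.mp hpv).2.1]
  have hv_le : normH v ^ 2 ≤ R ^ 2 := by
    have hQv : ‖Q h v‖ = normH v ^ 2 := by
      rw [polarization_oddPart_eq_neg_hodgeNormSq hsum horth hidem hreal hQsymm hQorth, norm_neg,
        ← Complex.re_eq_norm.mpr (hpos v), hnormH_sq]
    have hv_nonneg : 0 ≤ normH v := by rw [hnormH]; positivity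
    have := hQhv v hv_mem
    nlinarith [sq_nonneg (R - normH v)]
  calc normH h ^ 2 = (Q h h).re + 4 * normH v ^ 2 := by
        rw [hnormH_sq, hnormH_sq,
          hodgeNormSq_eq_polarization_add_oddPart hsum horth hidem hreal hQsymm hQorth]
        simp [v]
    _ ≤ K + 4 * R ^ 2 := by gcongr; exact (Complex.re_le_norm _).trans hQh

/-- For a polarized integral Hodge structure of weight zero (encoded by the
projections `π p` onto the Hodge summands `H^{p,-p}`, the conjugation `conj`, the
polarization `Q`, and the resulting Hodge norm `normH`), any integral class `h` with
`|Q(h,h)| ≤ K` and `|Q(h,v)| ≤ R‖v‖_H` for all `v ∈ F¹H` satisfies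
`‖h‖_H² ≤ K + 4R²`. -/
theorem stmt_0 {H : Type*} [AddCommGroup H] [Module ℂ H] [FiniteDimensional ℂ H]
    -- the Hodge decomposition H = ⊕ₚ H^{p,-p}, via its projections
    (s : Finset ℤ) (π : ℤ → (H →ₗ[ℂ] H))
    (hsum : ∀ x : H, ∑ p ∈ s, π p x = x)
    (horth : ∀ p q : ℤ, p ≠ q → ∀ x : H, π p (π q x) = 0)
    (hidem : ∀ (p : ℤ) (x : H), π p (π p x) = π p x)
    -- conjugation with respect to the real structure, swapping H^{p,-p} and H^{-p,p}
    (conj : H →+ H)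
    (hconj_smul : ∀ (c : ℂ) (x : H), conj (c • x) = (starRingEnd ℂ) c • conj x)
    (hconj_inv : ∀ x : H, conj (conj x) = x)
    (hconjπ : ∀ (p : ℤ) (x : H), conj (π p x) = π (-p) (conj x))
    -- the polarization form and the bilinear relations
    (Q : H →ₗ[ℂ] H →ₗ[ℂ] ℂ)
    (hQsymm : ∀ x y : H, Q x y = Q y x)
    (hQorth : ∀ (p q : ℤ) (x y : H), q ≠ -p → Q (π p x) (π q y) = 0)
    (hQpos : ∀ (p : ℤ) (x : H),
      0 ≤ ((-1 : ℂ) ^ p * Q (π p x) (conj (π p x))).re ∧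
      ((-1 : ℂ) ^ p * Q (π p x) (conj (π p x))).im = 0)
    -- the integral lattice (consisting of real classes)
    (HZ : AddSubgroup H) (hHZ : ∀ x ∈ HZ, conj x = x)
    -- the Hodge norm
    (normH : H → ℝ)
    (hnormH : ∀ x : H,
      normH x = Real.sqrt (∑ p ∈ s, ((-1 : ℂ) ^ p * Q (π p x) (conj (π p x))).re))
    (K R : ℝ) (hK : 0 ≤ K) (hR : 0 ≤ R)
    (h : H) (hh : h ∈ HZ)
    (hQh : ‖Q h h‖ ≤ K)
    (hQhv : ∀ v : H, (∀ p : ℤ, p ≤ 0 → π p v = 0) → ‖Q h v‖ ≤ R * normH v) :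
    (normH h) ^ 2 ≤ K + 4 * R ^ 2 :=
  stmt_0_general s π hsum horth hidem conj hconjπ Q hQsymm hQorth hQpos HZ hHZ normH hnormH K R h hh
    hQh hQhv
end

section
/- Let N₁, …, Nₙ be commuting linear operators on a finite-dimensional inner product space V, let α > 0, and let y_j(m) (j = 1,…,n, m ∈ ℕ) be sequences of real numbers. Suppose b(m) ∈ V is a sequence such that ‖b(m)‖ + Σ_{j=1}^n e^{α y_j(m)} ‖N_j b(m)‖ is bounded (b(m) is 'harmless'). Then there exists β > 0 and a decomposition b(m) = b₀(m) + b₁(m) + … + bₙ(m) such that b_k(m) ∈ ker N₁ ∩ … ∩ ker N_k for each k, and ‖b_k(m)‖ ≤ C·e^{-β y_{k+1}(m)} for a constant C (with the convention y_{n+1}(m) = 0). -/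
/-!
Let `W_k = ker N₁ ∩ ⋯ ∩ ker N_k` and `P_k` the orthogonal projection onto it. In finite
dimension `‖v - P_k v‖ ≤ c · max_{j ≤ k} ‖N_j v‖`, since `v - P_k v ∈ W_kᗮ` and `(N₁, …, N_k)` is
injective on `W_kᗮ`. Adjoining the identity as an `(n+1)`-st operator (its bound `‖b‖ ≤ C` is the
convention `y_{n+1} = 0`) makes the last kernel zero, so `b = ∑_k (P_k b - P_{k+1} b)`, and the
`k`-th piece lies in `W_k` with norm `O(max_{j ≤ k} e^{-α y_j})`. Attaching each piece to an
index `i ≤ k` where this maximum is attained keeps it in `W_i` and gives the decomposition with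
`β = α`.
-/

open Finset

theorem exists_regroup_norm_le {ι R E : Type*} [Fintype ι] [LinearOrder ι] [Semiring R]
    [SeminormedAddCommGroup E] [Module R E] {W : ι → Submodule R E} (hW : Antitone W)
    (d : ι → E) (hd : ∀ j, d j ∈ W j) (a g : ι → ℝ) (ha : ∀ j, 0 ≤ a j) (hg : ∀ j, 0 ≤ g j)
    (hdg : ∀ j, ∃ i ≤ j, ‖d j‖ ≤ a j * g i) :
    ∃ e : ι → E, ∑ k, e k = ∑ j, d j ∧ (∀ k, e k ∈ W k) ∧
      ∀ k, ‖e k‖ ≤ (∑ j, a j) * g k := by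
  classical
  choose r hr hdr using hdg
  refine ⟨fun k => ∑ j with r j = k, d j, sum_fiberwise _ r d, fun k => ?_, fun k => ?_⟩
  · refine Submodule.sum_mem _ fun j hj => ?_
    rw [(mem_filter.1 hj).2.symm]
    exact hW (hr j) (hd j)
  · calc ‖∑ j with r j = k, d j‖ ≤ ∑ j with r j = k, a j * g k :=
          norm_sum_le_of_le _ fun j hj => (mem_filter.1 hj).2 ▸ hdr j
      _ ≤ ∑ j, a j * g k :=
          sum_le_sum_of_subset_of_nonneg (filter_subset _ _) fun j _ _ =>
            mul_nonneg (ha j) (hg k)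
      _ = (∑ j, a j) * g k := (sum_mul _ _ _).symm

section commonKer

variable {R V F : Type*} [Semiring R] [AddCommMonoid V] [Module R V] [AddCommMonoid F]
  [Module R F] {m : ℕ} (M : Fin m → V →ₗ[R] F)

def commonKer (k : ℕ) : Submodule R V :=
  ⨅ (i : Fin m) (_ : (i : ℕ) < k), LinearMap.ker (M i)

theorem mem_commonKer {k : ℕ} {v : V} :
    v ∈ commonKer M k ↔ ∀ i : Fin m, (i : ℕ) < k → M i v = 0 := by
  simp [commonKer, Submodule.mem_iInf]

theorem commonKer_antitone : Antitone (commonKer M) := fun _ _ hkl _ hv =>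
  (mem_commonKer M).2 fun i hi => (mem_commonKer M).1 hv i (hi.trans_le hkl)

end commonKer

section

variable {V F : Type*} [NormedAddCommGroup V] [InnerProductSpace ℝ V] [FiniteDimensional ℝ V]
  [NormedAddCommGroup F] [NormedSpace ℝ F] {m : ℕ} (M : Fin m → V →ₗ[ℝ] F)

theorem LinearMap.exists_norm_sub_starProjection_ker_le (T : V →ₗ[ℝ] F) :
    ∃ c, 0 ≤ c ∧ ∀ v, ‖v - (LinearMap.ker T).starProjection v‖ ≤ c * ‖T v‖ := by
  set K := LinearMap.ker T
  have hinj : LinearMap.ker (T ∘ₗ Kᗮ.subtype) = ⊥ :=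
    LinearMap.ker_eq_bot'.2 fun x hx =>
      Subtype.ext (Submodule.disjoint_def.1 K.orthogonal_disjoint x hx x.2)
  obtain ⟨c, -, hc⟩ := (T ∘ₗ Kᗮ.subtype).exists_antilipschitzWith hinj
  refine ⟨c, c.coe_nonneg, fun v => ?_⟩
  have hT : T (v - K.starProjection v) = T v := by
    rw [map_sub, LinearMap.mem_ker.1 (K.starProjection_apply_mem v), sub_zero]
  simpa [hT] using hc.le_mul_norm (map_zero _) ⟨_, K.sub_starProjection_mem_orthogonal v⟩

theorem exists_norm_sub_starProjection_commonKer_le (k : ℕ) :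
    ∃ c, 0 ≤ c ∧ ∀ (v : V) (r : ℝ), 0 ≤ r → (∀ i : Fin m, (i : ℕ) < k → ‖M i v‖ ≤ r) →
      ‖v - (commonKer M k).starProjection v‖ ≤ c * r := by
  set T := LinearMap.pi fun i : {i : Fin m // (i : ℕ) < k} => M i
  have hT : LinearMap.ker T = commonKer M k := by
    ext v
    simp [T, LinearMap.ker_pi, mem_commonKer, Submodule.mem_iInf]
  obtain ⟨c, hc0, hc⟩ := T.exists_norm_sub_starProjection_ker_le
  refine ⟨c, hc0, fun v r hr hv => ?_⟩
  have hTv : ‖T v‖ ≤ r := (pi_norm_le_iff_of_nonneg hr).2 fun i => hv i i.2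
  have := (hc v).trans (mul_le_mul_of_nonneg_left hTv hc0)
  simpa only [hT] using this

theorem exists_commonKer_decomposition (hM : ∀ v, (∀ i, M i v = 0) → v = 0) :
    ∃ K : ℝ, ∀ (v : V) (g : Fin m → ℝ), (∀ i, ‖M i v‖ ≤ g i) →
      ∃ e : Fin m → V, ∑ k, e k = v ∧ (∀ k : Fin m, e k ∈ commonKer M k) ∧
        ∀ k, ‖e k‖ ≤ K * g k := by
  choose c hc0 hc using exists_norm_sub_starProjection_commonKer_le M
  refine ⟨∑ j : Fin m, (c j + c (j + 1)), fun v g hg => ?_⟩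
  set Q : ℕ → V := fun k => (commonKer M k).starProjection v
  have hQ_mem (k : ℕ) : Q k ∈ commonKer M k := Submodule.starProjection_apply_mem _ v
  have hd_mem (j : Fin m) : Q j - Q (j + 1) ∈ commonKer M j :=
    Submodule.sub_mem _ (hQ_mem j) (commonKer_antitone M (Nat.le_succ j) (hQ_mem (j + 1)))
  have hd_norm (j : Fin m) : ∃ i ≤ j, ‖Q j - Q (j + 1)‖ ≤ (c j + c (j + 1)) * g i := by
    obtain ⟨i, hij, hi⟩ := (Iic j).exists_max_image g nonempty_Iic
    have hQ (k : ℕ) (hk : k ≤ j + 1) : ‖v - Q k‖ ≤ c k * g i :=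
      hc k v (g i) ((norm_nonneg _).trans (hg i)) fun i' hi' =>
        (hg i').trans (hi i' (mem_Iic.2 (Fin.le_def.2 (by omega))))
    refine ⟨i, mem_Iic.1 hij, ?_⟩
    calc ‖Q j - Q (j + 1)‖ = ‖(v - Q (j + 1)) - (v - Q j)‖ := by congr 1; abel
      _ ≤ ‖v - Q (j + 1)‖ + ‖v - Q j‖ := norm_sub_le _ _
      _ ≤ c (j + 1) * g i + c j * g i := add_le_add (hQ _ le_rfl) (hQ _ (Nat.le_succ j))
      _ = (c j + c (j + 1)) * g i := by ring
  obtain ⟨e, he_sum, he_mem, he_norm⟩ :=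
    exists_regroup_norm_le (W := fun k : Fin m => commonKer M k)
      (fun _ _ h => commonKer_antitone M h) _ hd_mem _ g
      (fun j => add_nonneg (hc0 j) (hc0 (j + 1))) (fun i => (norm_nonneg _).trans (hg i)) hd_norm
  have hQ_zero : Q 0 = v :=
    Submodule.starProjection_eq_self_iff.2 ((mem_commonKer M).2 (by simp))
  have hQ_last : Q m = 0 := hM _ fun i => (mem_commonKer M).1 (hQ_mem m) i i.2
  refine ⟨e, ?_, he_mem, he_norm⟩
  rw [he_sum, Fin.sum_univ_eq_sum_range (fun j => Q j - Q (j + 1)), sum_range_sub', hQ_zero,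
    hQ_last, sub_zero]

end

theorem stmt_4_general {V : Type*} [NormedAddCommGroup V] [InnerProductSpace ℝ V]
    [FiniteDimensional ℝ V]
    {n : ℕ} (N : Fin n → (V →ₗ[ℝ] V))
    (α : ℝ) (hα : 0 < α) (y : Fin n → ℕ → ℝ) (b : ℕ → V)
    (C : ℝ) (hb : ∀ m : ℕ, ‖b m‖ + ∑ j, Real.exp (α * y j m) * ‖N j (b m)‖ ≤ C) :
    ∃ β : ℝ, 0 < β ∧ ∃ C' : ℝ, ∃ bb : Fin (n + 1) → ℕ → V,
      (∀ m : ℕ, b m = ∑ k, bb k m) ∧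
      (∀ (k : Fin (n + 1)) (m : ℕ) (j : Fin n), (j : ℕ) < (k : ℕ) → N j (bb k m) = 0) ∧
      (∀ (k : Fin (n + 1)) (m : ℕ),
        ‖bb k m‖ ≤ C' * Real.exp (-β * (if h : (k : ℕ) < n then y ⟨k, h⟩ m else 0))) := by
  set M : Fin (n + 1) → V →ₗ[ℝ] V := Fin.snoc N LinearMap.id
  obtain ⟨K, hK⟩ :=
    exists_commonKer_decomposition M fun v hv => by simpa [M] using hv (Fin.last n)
  have hN (m : ℕ) (j : Fin n) : Real.exp (α * y j m) * ‖N j (b m)‖ ≤ C :=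
    ((single_le_sum (fun i _ => by positivity) (mem_univ j)).trans
      (le_add_of_nonneg_left (norm_nonneg _))).trans (hb m)
  have hMb (m : ℕ) (k : Fin (n + 1)) :
      ‖M k (b m)‖ ≤ C * Real.exp (-α * if h : (k : ℕ) < n then y ⟨k, h⟩ m else 0) := by
    induction k using Fin.lastCases with
    | last =>
      simpa [M] using (le_add_of_nonneg_right (by positivity)).trans (hb m)
    | cast j =>
      simp only [M, Fin.snoc_castSucc, Fin.val_castSucc, j.is_lt, dite_true, Fin.eta]
      rw [neg_mul, Real.exp_neg, ← div_eq_mul_inv, le_div_iff₀ (Real.exp_pos _), mul_comm]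
      exact hN m j
  choose e he_sum he_mem he_norm using fun m => hK (b m) _ (hMb m)
  refine ⟨α, hα, K * C, fun k m => e m k, fun m => (he_sum m).symm, fun k m j hj => ?_,
    fun k m => ?_⟩
  · simpa [M] using (mem_commonKer M).1 (he_mem m k) j.castSucc hj
  · simpa [mul_assoc] using he_norm m k

/-- A harmless sequence `b(m)` (i.e. `‖b(m)‖ + ∑ⱼ e^{α yⱼ(m)}‖Nⱼ b(m)‖`
bounded) with respect to commuting operators `N₁,…,Nₙ` decomposes as
`b(m) = b₀(m) + … + bₙ(m)` with `b_k(m) ∈ ker N₁ ∩ … ∩ ker N_k` and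
`‖b_k(m)‖ ≤ C e^{-β y_{k+1}(m)}` (with the convention `y_{n+1}(m) = 0`). -/
theorem stmt_4 {V : Type*} [NormedAddCommGroup V] [InnerProductSpace ℝ V]
    [FiniteDimensional ℝ V]
    {n : ℕ} (N : Fin n → (V →ₗ[ℝ] V))
    (hcomm : ∀ i j, N i ∘ₗ N j = N j ∘ₗ N i)
    (α : ℝ) (hα : 0 < α) (y : Fin n → ℕ → ℝ) (b : ℕ → V)
    (C : ℝ) (hb : ∀ m : ℕ, ‖b m‖ + ∑ j, Real.exp (α * y j m) * ‖N j (b m)‖ ≤ C) :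
    ∃ β : ℝ, 0 < β ∧ ∃ C' : ℝ, ∃ bb : Fin (n + 1) → ℕ → V,
      (∀ m : ℕ, b m = ∑ k, bb k m) ∧
      (∀ (k : Fin (n + 1)) (m : ℕ) (j : Fin n), (j : ℕ) < (k : ℕ) → N j (bb k m) = 0) ∧
      (∀ (k : Fin (n + 1)) (m : ℕ),
        ‖bb k m‖ ≤ C' * Real.exp (-β * (if h : (k : ℕ) < n then y ⟨k, h⟩ m else 0))) :=
  stmt_4_general N α hα y b C hb
end

section
/- Let V be a finite-dimensional complex vector space with a real structure V_R and a bigrading V = ⊕_{p,q} I^{p,q} defining an R-split mixed Hodge structure, i.e., conjugation with respect to V_R satisfies conj(I^{p,q}) = I^{q,p}. Set W_w = ⊕_{p+q ≤ w} I^{p,q}, F^k = ⊕_{p ≥ k} I^{p,q}, and let Y be the real semisimple operator acting on I^{p,q} as multiplication by p+q. Let N be a real endomorphism with N(I^{p,q}) ⊆ I^{p-1,q-1}. If a real vector h ∈ W_{2ℓ} ∩ V_R satisfies h ≡ b mod e^{iN}F^ℓ for some b with Yb = 2ℓ·b and Nb = 0, then Yh = 2ℓ·h and Nh = 0. -/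
/-- Let `V = ⊕ I^{p,q}` be an `ℝ`-split mixed Hodge structure (encoded by
projections `π (p,q)` and the conjugation `conj` with `conj(I^{p,q}) = I^{q,p}`), with
splitting `Y` acting as `p+q` on `I^{p,q}`, and let `N` be a real `(-1,-1)`-morphism.
If a real vector `h ∈ W_{2ℓ}` satisfies `h ≡ b mod e^{iN} F^ℓ` for some `b` with
`Y b = 2ℓ b` and `N b = 0`, then `Y h = 2ℓ h` and `N h = 0`. -/
theorem stmt_6 {V : Type*} [NormedAddCommGroup V] [NormedSpace ℂ V]
    [FiniteDimensional ℂ V]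
    (s : Finset (ℤ × ℤ)) (π : ℤ × ℤ → (V →L[ℂ] V))
    (hsum : ∀ x : V, ∑ pq ∈ s, π pq x = x)
    (horth : ∀ pq pq' : ℤ × ℤ, pq ≠ pq' → ∀ x : V, π pq (π pq' x) = 0)
    (hidem : ∀ (pq : ℤ × ℤ) (x : V), π pq (π pq x) = π pq x)
    (conj : V →+ V)
    (hconj_smul : ∀ (c : ℂ) (x : V), conj (c • x) = (starRingEnd ℂ) c • conj x)
    (hconj_inv : ∀ x : V, conj (conj x) = x)
    (hconjπ : ∀ (p q : ℤ) (x : V), conj (π (p, q) x) = π (q, p) (conj x))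
    (Y N : V →L[ℂ] V)
    (hY : ∀ (p q : ℤ) (x : V), Y (π (p, q) x) = ((p + q : ℤ) : ℂ) • π (p, q) x)
    (hNreal : ∀ x : V, conj (N x) = N (conj x))
    (hN : ∀ (p q : ℤ) (x : V), π (p, q) x = x → π (p - 1, q - 1) (N x) = N x)
    (ℓ : ℤ) (h b : V)
    (hreal : conj h = h)
    (hW : ∀ p q : ℤ, 2 * ℓ < p + q → π (p, q) h = 0)
    (hYb : Y b = ((2 * ℓ : ℤ) : ℂ) • b) (hNb : N b = 0)
    (hcong : ∃ f : V, (∀ p q : ℤ, p < ℓ → π (p, q) f = 0) ∧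
      h - b = NormedSpace.exp (Complex.I • N) f) :
    Y h = ((2 * ℓ : ℤ) : ℂ) • h ∧ N h = 0 := by
  classical
  obtain ⟨f, hf1, hf2⟩ := hcong
  -- π vanishes outside s
  have hπ0 : ∀ pq : ℤ × ℤ, pq ∉ s → ∀ x : V, π pq x = 0 := by
    intro pq hpq x
    conv_lhs => rw [← hsum x]
    rw [map_sum]
    exact Finset.sum_eq_zero fun pq' h' =>
      horth _ _ (by rintro rfl; exact hpq h') x
  -- commutation of π with N
  have hπN : ∀ (p q : ℤ) (x : V), π (p, q) (N x) = N (π (p + 1, q + 1) x) := by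
    intro p q x
    have key : ∀ ab ∈ s, ab ≠ (p + 1, q + 1) → π (p, q) (N (π ab x)) = 0 := by
      rintro ⟨a, c⟩ _ hne
      have hw : π (a - 1, c - 1) (N (π (a, c) x)) = N (π (a, c) x) :=
        hN a c _ (hidem _ x)
      rw [← hw]
      refine horth _ _ (fun hcon => hne ?_) _
      have h1 : p = a - 1 := congrArg Prod.fst hcon
      have h2 : q = c - 1 := congrArg Prod.snd hcon
      simp only [Prod.mk.injEq]
      omega
    by_cases hmem : (p + 1, q + 1) ∈ s
    · conv_lhs => rw [← hsum x, map_sum, map_sum]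
      rw [Finset.sum_eq_single_of_mem (p + 1, q + 1) hmem key]
      have hw := hN (p + 1) (q + 1) (π (p + 1, q + 1) x) (hidem _ x)
      have harg : ((p + 1 - 1 : ℤ), (q + 1 - 1 : ℤ)) = (p, q) := by
        simp only [Prod.mk.injEq]; omega
      rw [harg] at hw
      exact hw
    · rw [hπ0 _ hmem x, map_zero]
      conv_lhs => rw [← hsum x, map_sum, map_sum]
      exact Finset.sum_eq_zero fun ab hab => key ab hab (by rintro rfl; exact hmem hab)
  -- commutation of π with Y
  have hπY : ∀ (p q : ℤ) (x : V), π (p, q) (Y x) = ((p + q : ℤ) : ℂ) • π (p, q) x := by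
    intro p q x
    by_cases hmem : (p, q) ∈ s
    · conv_lhs => rw [← hsum x, map_sum, map_sum]
      rw [Finset.sum_eq_single_of_mem (p, q) hmem]
      · rw [hY, map_smul, hidem]
      · rintro ⟨a, c⟩ _ hne
        rw [hY, map_smul, horth _ _ (Ne.symm hne), smul_zero]
    · rw [hπ0 _ hmem, hπ0 _ hmem, smul_zero]
  -- π commutes with powers of N
  have hπNn : ∀ (n : ℕ) (p q : ℤ) (x : V),
      π (p, q) ((N ^ n) x) = (N ^ n) (π (p + n, q + n) x) := by
    intro n
    induction n with
    | zero => intro p q x; simp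
    | succ k ih =>
      intro p q x
      have harg : ((p + ((k + 1 : ℕ) : ℤ), q + ((k + 1 : ℕ) : ℤ))) =
          (p + (k : ℤ) + 1, q + (k : ℤ) + 1) := by
        simp only [Prod.mk.injEq]; constructor <;> push_cast <;> ring
      rw [harg, pow_succ, ContinuousLinearMap.mul_apply, ih, hπN,
        ContinuousLinearMap.mul_apply]
  -- nilpotency of N
  have hnil : ∃ m : ℕ, 1 ≤ m ∧ (N : V →L[ℂ] V) ^ m = 0 := by
    set k := 1 + (s ×ˢ s).sup (fun x => (x.1.1 - x.2.1).toNat) with hk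
    refine ⟨k, by omega, ?_⟩
    ext x
    have : (N ^ k) x = ∑ pq ∈ s, (N ^ k) (π pq x) := by
      conv_lhs => rw [← hsum x, map_sum]
    rw [ContinuousLinearMap.zero_apply, this]
    refine Finset.sum_eq_zero ?_
    rintro ⟨a, c⟩ hac
    have hout : (a - k, c - k) ∉ s := by
      intro hin
      have hmem2 : (((a, c), (a - (k : ℤ), c - (k : ℤ))) : (ℤ × ℤ) × (ℤ × ℤ)) ∈ s ×ˢ s :=
        Finset.mem_product.2 ⟨hac, hin⟩
      have hle := Finset.le_sup (f := fun x : (ℤ × ℤ) × (ℤ × ℤ) => (x.1.1 - x.2.1).toNat) hmem2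
      simp only at hle
      omega
    have := hπNn k (a - k) (c - k) x
    rw [hπ0 _ hout] at this
    have harg : ((a - k + k : ℤ), (c - k + k : ℤ)) = (a, c) := by
      simp only [Prod.mk.injEq]; omega
    rw [harg] at this
    exact this.symm
  obtain ⟨m, hm1, hm⟩ := hnil
  -- exponential as finite sum
  have hexpop : ∀ c : ℂ, NormedSpace.exp (c • N) =
      ∑ n ∈ Finset.range m, ((n.factorial : ℂ))⁻¹ • (c • N) ^ n := by
    intro c
    rw [NormedSpace.exp_eq_tsum ℂ]
    refine tsum_eq_sum ?_
    intro n hn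
    have hn' : m ≤ n := by simpa using hn
    have hz : (N : V →L[ℂ] V) ^ n = 0 := by
      obtain ⟨j, rfl⟩ : ∃ j, n = m + j := ⟨n - m, by omega⟩
      rw [pow_add, hm, zero_mul]
    rw [smul_pow, hz, smul_zero, smul_zero]
  have hexp : ∀ (c : ℂ) (x : V), NormedSpace.exp (c • N) x =
      ∑ n ∈ Finset.range m, ((n.factorial : ℂ))⁻¹ • c ^ n • (N ^ n) x := by
    intro c x
    rw [hexpop, ContinuousLinearMap.sum_apply]
    refine Finset.sum_congr rfl fun n _ => ?_
    rw [ContinuousLinearMap.smul_apply, smul_pow, ContinuousLinearMap.smul_apply]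
  -- componentwise exponential
  have hπexp : ∀ (c : ℂ) (p q : ℤ) (x : V),
      π (p, q) (NormedSpace.exp (c • N) x) =
      ∑ n ∈ Finset.range m, ((n.factorial : ℂ))⁻¹ • c ^ n • (N ^ n) (π (p + n, q + n) x) := by
    intro c p q x
    rw [hexp, map_sum]
    refine Finset.sum_congr rfl fun n _ => ?_
    rw [map_smul, map_smul, hπNn]
  -- exp fixes kernel of N
  have hEker : ∀ (c : ℂ) (x : V), N x = 0 → NormedSpace.exp (c • N) x = x := by
    intro c x hx
    rw [hexp]
    rw [Finset.sum_eq_single_of_mem 0 (Finset.mem_range.2 (by omega))]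
    · simp
    · intro n _ hn0
      obtain ⟨j, rfl⟩ : ∃ j, n = j + 1 := ⟨n - 1, by omega⟩
      have hz : (N ^ (j + 1)) x = 0 := by
        rw [pow_succ, ContinuousLinearMap.mul_apply, hx, map_zero]
      rw [hz, smul_zero, smul_zero]
  -- inverse of exp(I • N)
  have hEinv : ∀ x : V,
      NormedSpace.exp ((-Complex.I) • N) (NormedSpace.exp (Complex.I • N) x) = x := by
    intro x
    have hc : Commute ((-Complex.I) • N) (Complex.I • N) := by
      rw [neg_smul]
      exact (Commute.refl _).neg_left
    have he := NormedSpace.exp_add_of_commute_of_mem_ball (𝕂 := ℂ) hc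
      ((NormedSpace.expSeries_radius_eq_top ℂ (V →L[ℂ] V)).symm ▸ edist_lt_top _ _)
      ((NormedSpace.expSeries_radius_eq_top ℂ (V →L[ℂ] V)).symm ▸ edist_lt_top _ _)
    have hz : (-Complex.I) • N + Complex.I • N = 0 := by
      rw [neg_smul, neg_add_cancel]
    rw [hz, NormedSpace.exp_zero] at he
    have h2 := congrArg (fun T : V →L[ℂ] V => T x) he
    simpa using h2.symm
  have hfeq : f = NormedSpace.exp ((-Complex.I) • N) (h - b) := by
    rw [hf2, hEinv]
  -- conj commutes with powers of N
  have hconjNn : ∀ (n : ℕ) (x : V), conj ((N ^ n) x) = (N ^ n) (conj x) := by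
    intro n
    induction n with
    | zero => intro x; simp
    | succ k ih =>
      intro x
      rw [pow_succ, ContinuousLinearMap.mul_apply, ih, hNreal,
        ContinuousLinearMap.mul_apply]
  -- conj of exponential
  have hconjexp : ∀ (c : ℂ) (x : V),
      conj (NormedSpace.exp (c • N) x) =
      NormedSpace.exp ((starRingEnd ℂ c) • N) (conj x) := by
    intro c x
    rw [hexp, hexp, map_sum]
    refine Finset.sum_congr rfl fun n _ => ?_
    rw [hconj_smul, hconj_smul, hconjNn, map_pow]
    congr 2
    simp
  -- support of b
  have hπb : ∀ p q : ℤ, p + q ≠ 2 * ℓ → π (p, q) b = 0 := by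
    intro p q hpq
    have h1 : π (p, q) (Y b) = ((2 * ℓ : ℤ) : ℂ) • π (p, q) b := by
      rw [hYb, map_smul]
    rw [hπY] at h1
    have h2 : (((p + q : ℤ) : ℂ) - ((2 * ℓ : ℤ) : ℂ)) • π (p, q) b = 0 := by
      rw [sub_smul, h1, sub_self]
    rcases smul_eq_zero.1 h2 with hc | hv
    · exfalso
      apply hpq
      have : ((p + q : ℤ) : ℂ) = ((2 * ℓ : ℤ) : ℂ) := by linear_combination hc
      exact_mod_cast this
    · exact hv
  -- componentwise N b = 0
  have hNbc : ∀ p q : ℤ, N (π (p, q) b) = 0 := by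
    intro p q
    have := hπN (p - 1) (q - 1) b
    rw [hNb, map_zero] at this
    have harg : ((p - 1 + 1 : ℤ), (q - 1 + 1 : ℤ)) = (p, q) := by
      simp only [Prod.mk.injEq]; omega
    rw [harg] at this
    exact this.symm
  -- reality of h components
  have hπh_conj : ∀ p q : ℤ, conj (π (p, q) h) = π (q, p) h := by
    intro p q; rw [hconjπ, hreal]
  -- f has weights ≤ 2ℓ
  have hWf : ∀ p q : ℤ, 2 * ℓ < p + q → π (p, q) f = 0 := by
    intro p q hpq
    rw [hfeq, hπexp]
    refine Finset.sum_eq_zero fun n _ => ?_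
    have hz : π (p + n, q + n) (h - b) = 0 := by
      rw [map_sub, hW _ _ (by push_cast; omega), hπb _ _ (by push_cast; omega), sub_zero]
    rw [hz, map_zero, smul_zero, smul_zero]
  -- the two key equations
  have hEh : NormedSpace.exp ((-Complex.I) • N) h = b + f := by
    have hb : h = b + (h - b) := by abel
    conv_lhs => rw [hb]
    rw [map_add, hEker _ _ hNb, ← hfeq]
  have hEh' : NormedSpace.exp (Complex.I • N) h = conj b + conj f := by
    have := congrArg (fun x => conj x) hEh
    simp only [map_add] at this
    rw [hconjexp, hreal] at this
    have hci : starRingEnd ℂ (-Complex.I) = Complex.I := by simp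
    rw [hci] at this
    exact this
  have hA : ∀ p q : ℤ, p < ℓ → p + q ≠ 2 * ℓ →
      ∑ n ∈ Finset.range m,
        ((n.factorial : ℂ))⁻¹ • (-Complex.I) ^ n • (N ^ n) (π (p + n, q + n) h) = 0 := by
    intro p q hp hpq
    have := hπexp (-Complex.I) p q h
    rw [hEh, map_add, hπb _ _ hpq, hf1 _ _ hp, add_zero] at this
    exact this.symm
  have hB : ∀ p q : ℤ, q < ℓ → p + q ≠ 2 * ℓ →
      ∑ n ∈ Finset.range m,
        ((n.factorial : ℂ))⁻¹ • Complex.I ^ n • (N ^ n) (π (p + n, q + n) h) = 0 := by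
    intro p q hq hpq
    have := hπexp Complex.I p q h
    rw [hEh', map_add] at this
    have hcb : π (p, q) (conj b) = 0 := by
      rw [← hconjπ, hπb _ _ (by omega), map_zero]
    have hcf : π (p, q) (conj f) = 0 := by
      rw [← hconjπ, hf1 _ _ hq, map_zero]
    rw [hcb, hcf, add_zero] at this
    exact this.symm
  -- components of h below the ceiling that lie in F^ℓ equal those of b
  have hbc : ∀ a c : ℤ, a < ℓ → a + c = 2 * ℓ → π (a, c) h = π (a, c) b := by
    intro a c ha hac
    have hh : h = b + NormedSpace.exp (Complex.I • N) f := by rw [← hf2]; abel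
    conv_lhs => rw [hh]
    rw [map_add, hπexp]
    rw [Finset.sum_eq_zero, add_zero]
    intro n _
    rcases Nat.eq_zero_or_pos n with rfl | hn
    · have harg : ((a + ((0 : ℕ) : ℤ), c + ((0 : ℕ) : ℤ))) = (a, c) := by
        simp only [Prod.mk.injEq]; omega
      rw [harg, hf1 _ _ ha, map_zero, smul_zero, smul_zero]
    · rw [hWf _ _ (by push_cast; omega), map_zero, smul_zero, smul_zero]
  -- key lemma: N kills weight-2ℓ components of h
  have hL2 : ∀ a c : ℤ, a + c = 2 * ℓ → N (π (a, c) h) = 0 := by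
    intro a c hac
    rcases lt_trichotomy a ℓ with ha | ha | ha
    · rw [hbc a c ha hac]
      exact hNbc a c
    · have hcl : c = ℓ := by omega
      rw [ha, hcl]
      by_cases hm2 : 2 ≤ m
      · have htr : ∀ c' : ℂ,
            ∑ n ∈ Finset.range m,
              ((n.factorial : ℂ))⁻¹ • c' ^ n • (N ^ n) (π (ℓ - 1 + n, ℓ - 1 + n) h) =
            π (ℓ - 1, ℓ - 1) h + c' • N (π (ℓ, ℓ) h) := by
          intro c'
          have hsub2 : ∑ n ∈ Finset.range m,
              ((n.factorial : ℂ))⁻¹ • c' ^ n • (N ^ n) (π (ℓ - 1 + n, ℓ - 1 + n) h) =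
              ∑ n ∈ Finset.range 2,
              ((n.factorial : ℂ))⁻¹ • c' ^ n • (N ^ n) (π (ℓ - 1 + n, ℓ - 1 + n) h) := by
            refine (Finset.sum_subset (Finset.range_subset_range.2 hm2) ?_).symm
            intro n _ hn
            have hn2 : 2 ≤ n := by simp only [Finset.mem_range] at hn; omega
            rw [hW _ _ (by push_cast; omega), map_zero, smul_zero, smul_zero]
          rw [hsub2, Finset.sum_range_succ, Finset.sum_range_one]
          have h0 : (ℓ : ℤ) - 1 + ((0 : ℕ) : ℤ) = ℓ - 1 := by push_cast; ring
          have h1 : (ℓ : ℤ) - 1 + ((1 : ℕ) : ℤ) = ℓ := by push_cast; ring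
          rw [h0, h1]
          simp [Nat.factorial]
        have hAe := hA (ℓ - 1) (ℓ - 1) (by omega) (by omega)
        have hBe := hB (ℓ - 1) (ℓ - 1) (by omega) (by omega)
        rw [htr] at hAe hBe
        have hsub : ((Complex.I) - (-Complex.I)) • N (π (ℓ, ℓ) h) = 0 := by
          rw [sub_smul]
          have h2 := add_left_cancel (hBe.trans hAe.symm)
          rw [h2, sub_self]
        rcases smul_eq_zero.1 hsub with hc | hv
        · exfalso
          have h2I : (2 : ℂ) * Complex.I = 0 := by linear_combination hc
          simp [Complex.ext_iff] at h2I
        · exact hv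
      · have hm1' : m = 1 := by omega
        have hN0 : (N : V →L[ℂ] V) = 0 := by
          rw [← pow_one N, ← hm1', hm]
        rw [hN0, ContinuousLinearMap.zero_apply]
    · have hca : c < ℓ := by omega
      have h1 : π (a, c) h = conj (π (c, a) b) := by
        rw [← hbc c a hca (by omega), hπh_conj]
      rw [h1, ← hNreal, hNbc, map_zero]
  -- vanishing of low-weight components of h
  have hM : ∀ d : ℕ, ∀ p q : ℤ, p + q + d + 1 = 2 * ℓ → π (p, q) h = 0 := by
    intro d
    induction d using Nat.strong_induction_on with
    | _ d ih =>
      intro p q hpq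
      have hterm : ∀ (c' : ℂ), ∀ n ∈ Finset.range m, n ≠ 0 →
          ((n.factorial : ℂ))⁻¹ • c' ^ n • (N ^ n) (π (p + n, q + n) h) = 0 := by
        intro c' n _ hn0
        have hv : (N ^ n) (π (p + n, q + n) h) = 0 := by
          rcases lt_trichotomy (p + q + 2 * (n : ℤ)) (2 * ℓ) with h1 | h1 | h1
          · have hd : (d - 2 * n) < d := by omega
            have := ih (d - 2 * n) hd (p + n) (q + n) (by push_cast; omega)
            rw [this, map_zero]
          · obtain ⟨j, rfl⟩ : ∃ j, n = j + 1 := ⟨n - 1, by omega⟩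
            rw [pow_succ, ContinuousLinearMap.mul_apply,
              hL2 _ _ (by push_cast at h1 ⊢; omega), map_zero]
          · rw [hW _ _ (by push_cast; omega), map_zero]
        rw [hv, smul_zero, smul_zero]
      rcases lt_or_ge p ℓ with hp | hp
      · have hAe := hA p q hp (by omega)
        rw [Finset.sum_eq_single_of_mem 0 (Finset.mem_range.2 (by omega))
          (hterm (-Complex.I))] at hAe
        simpa using hAe
      · have hq : q < ℓ := by omega
        have hBe := hB p q hq (by omega)
        rw [Finset.sum_eq_single_of_mem 0 (Finset.mem_range.2 (by omega))
          (hterm Complex.I)] at hBe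
        simpa using hBe
  constructor
  · conv_lhs => rw [← hsum h]
    conv_rhs => rw [← hsum h]
    rw [map_sum, Finset.smul_sum]
    refine Finset.sum_congr rfl ?_
    rintro ⟨p, q⟩ _
    rw [hY]
    by_cases hw : p + q = 2 * ℓ
    · rw [hw]
    · rcases lt_or_gt_of_ne hw with h1 | h1
      · rw [hM (2 * ℓ - (p + q) - 1).toNat p q (by omega)]
        simp
      · rw [hW p q h1]
        simp
  · conv_lhs => rw [← hsum h]
    rw [map_sum]
    refine Finset.sum_eq_zero ?_
    rintro ⟨p, q⟩ _
    by_cases hw : p + q = 2 * ℓ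
    · exact hL2 p q hw
    · rcases lt_or_gt_of_ne hw with h1 | h1
      · rw [hM (2 * ℓ - (p + q) - 1).toNat p q (by omega), map_zero]
      · rw [hW p q h1, map_zero]
end
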